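/- Let P ⊆ ℝⁿ be a full-dimensional anti-blocking polytope and set Q = conv((2·P × {1}) ∪ ((−2·A(P)) × {−1})) ⊆ ℝⁿ × ℝ. Then the polar Q° equals conv(((−P) × {1}) ∪ (A(P) × {−1})), which is the image of Q under the linear automorphism (x,t) ↦ (−x/2, t); in particular Q is linearly isomorphic to its polar Q°. -/

import Mathlib

open Set Pointwise

/-- `Q ⊆ ℝⁿ` is anti-blocking: contained in the nonnegative orthant and down-closed
within it. -/
def IsAntiBlocking {n : ℕ} (Q : Set (Fin n → ℝ)) : Prop :=
  (∀ x ∈ Q, ∀ i, 0 ≤ x i) ∧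
  ∀ q ∈ Q, ∀ p : Fin n → ℝ, (∀ i, 0 ≤ p i ∧ p i ≤ q i) → p ∈ Q

/-- `Q` is a polytope: the convex hull of a finite set. -/
def IsPolytope {n : ℕ} (Q : Set (Fin n → ℝ)) : Prop :=
  ∃ V : Finset (Fin n → ℝ), Q = convexHull ℝ (V : Set (Fin n → ℝ))

/-- The anti-blocking polytope `A(Q)` associated to `Q ⊆ ℝⁿ_{≥0}`. -/
def antiBlocker {n : ℕ} (Q : Set (Fin n → ℝ)) : Set (Fin n → ℝ) :=
  {d | (∀ i, 0 ≤ d i) ∧ ∀ x ∈ Q, ∑ i, d i * x i ≤ 1}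

/-- The Cayley polytope `conv((Q₁ × {1}) ∪ (Q₂ × {−1})) ⊆ ℝⁿ × ℝ`. -/
def cayley {n : ℕ} (Q₁ Q₂ : Set (Fin n → ℝ)) : Set ((Fin n → ℝ) × ℝ) :=
  convexHull ℝ
    (((fun x => (x, (1 : ℝ))) '' Q₁) ∪ ((fun x => (x, (-1 : ℝ))) '' Q₂))

/-- The polar of a subset of `ℝⁿ × ℝ` with respect to the standard inner product. -/
def polarNR {n : ℕ} (S : Set ((Fin n → ℝ) × ℝ)) : Set ((Fin n → ℝ) × ℝ) :=
  {y | ∀ x ∈ S, (∑ i, y.1 i * x.1 i) + y.2 * x.2 ≤ 1}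

/-!
A point `(d, 2t - 1)` of the polar of `Q` satisfies `d ⬝ᵥ q ≤ 1 - t` on `P` and
`-d ⬝ᵥ a ≤ t` on `A(P)`. Since `P` and `A(P)` are down-closed these inequalities survive
replacing `d` by `d⁺`, resp. `-d` by `d⁻`, so `d⁺ ∈ (1 - t) • A(P)` and, by the bipolar theorem
`A(A(P)) = P`, `d⁻ ∈ t • P`. Hence `(d, 2t - 1) = t • (-d⁻/t, 1) + (1 - t) • (d⁺/(1 - t), -1)`
lies in `conv((-P × {1}) ∪ (A(P) × {-1}))`; the degenerate cases `t = 0, 1` are covered because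
`P` and `A(P)` both contain a strictly positive vector (full-dimensionality, resp. boundedness
of `P`). The reverse inclusion is a direct check on the four kinds of vertices.
-/

section AntiBlocker

variable {n : ℕ}

theorem IsPolytope.convex {P : Set (Fin n → ℝ)} (hpoly : IsPolytope P) : Convex ℝ P := by
  obtain ⟨V, rfl⟩ := hpoly
  exact convex_convexHull ℝ _

theorem IsPolytope.isCompact {P : Set (Fin n → ℝ)} (hpoly : IsPolytope P) : IsCompact P := by
  obtain ⟨V, rfl⟩ := hpoly
  exact V.finite_toSet.isCompact_convexHull ℝ

theorem mem_antiBlocker_iff {P : Set (Fin n → ℝ)} {d : Fin n → ℝ} :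
    d ∈ antiBlocker P ↔ 0 ≤ d ∧ ∀ x ∈ P, d ⬝ᵥ x ≤ 1 :=
  Iff.rfl

theorem zero_mem_antiBlocker (P : Set (Fin n → ℝ)) : 0 ∈ antiBlocker P :=
  mem_antiBlocker_iff.2 ⟨le_rfl, fun x _ => by simp⟩

theorem IsAntiBlocking.zero_mem {P : Set (Fin n → ℝ)} (hab : IsAntiBlocking P)
    (hne : P.Nonempty) : 0 ∈ P := by
  obtain ⟨q, hq⟩ := hne
  exact hab.2 q hq 0 fun i => ⟨le_rfl, hab.1 q hq i⟩

theorem isAntiBlocking_antiBlocker {P : Set (Fin n → ℝ)} (hP : ∀ x ∈ P, ∀ i, 0 ≤ x i) :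
    IsAntiBlocking (antiBlocker P) := by
  refine ⟨fun d hd => hd.1, fun a ha d hd => ⟨fun i => (hd i).1, fun x hx => ?_⟩⟩
  exact (dotProduct_le_dotProduct_of_nonneg_right (fun i => (hd i).2) (hP x hx)).trans
    (ha.2 x hx)

/-- Zeroing the coordinates where `d` is negative keeps a point of `P` inside `P`, and turns
`d ⬝ᵥ q` into `d⁺ ⬝ᵥ q`. -/
theorem posPart_dotProduct_le {P : Set (Fin n → ℝ)} (hab : IsAntiBlocking P)
    {d : Fin n → ℝ} {μ : ℝ} (h : ∀ q ∈ P, d ⬝ᵥ q ≤ μ) {q : Fin n → ℝ} (hq : q ∈ P) :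
    d⁺ ⬝ᵥ q ≤ μ := by
  set q' : Fin n → ℝ := fun i => if 0 ≤ d i then q i else 0
  have hq' : q' ∈ P := hab.2 q hq q' fun i => by
    by_cases hd : 0 ≤ d i <;> simp [q', hd, hab.1 q hq i]
  have heq : d⁺ ⬝ᵥ q = d ⬝ᵥ q' := by
    refine Finset.sum_congr rfl fun i _ => ?_
    by_cases hd : 0 ≤ d i
    · simp [q', hd]
    · simp [q', hd, posPart_eq_zero.2 (le_of_not_ge hd)]
  exact heq ▸ h q' hq'

theorem mem_smul_antiBlocker_of_forall_dotProduct_le {P : Set (Fin n → ℝ)}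
    (hpos : ∃ q ∈ P, ∀ i, 0 < q i) {d : Fin n → ℝ} {μ : ℝ} (hμ : 0 ≤ μ) (hd : 0 ≤ d)
    (h : ∀ q ∈ P, d ⬝ᵥ q ≤ μ) : d ∈ μ • antiBlocker P := by
  rcases hμ.eq_or_lt with rfl | hμ
  · obtain ⟨q, hq, hqpos⟩ := hpos
    have hd0 : d = 0 := funext fun i => by
      have hi : d i * q i ≤ d ⬝ᵥ q :=
        Finset.single_le_sum (fun j _ => mul_nonneg (hd j) (hqpos j).le) (Finset.mem_univ i)
      have := h q hq
      exact le_antisymm (nonpos_of_mul_nonpos_left (by linarith) (hqpos i)) (hd i)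
    rw [hd0, zero_smul_set ⟨0, zero_mem_antiBlocker P⟩]
    rfl
  · rw [mem_smul_set_iff_inv_smul_mem₀ hμ.ne']
    refine mem_antiBlocker_iff.2 ⟨smul_nonneg (inv_nonneg.2 hμ.le) hd, fun q hq => ?_⟩
    rw [smul_dotProduct, smul_eq_mul, inv_mul_le_one₀ hμ]
    exact h q hq

theorem exists_pos_mem_antiBlocker {P : Set (Fin n → ℝ)} (hb : Bornology.IsBounded P) :
    ∃ d ∈ antiBlocker P, ∀ i, 0 < d i := by
  obtain ⟨C, hC⟩ := isBounded_iff_forall_norm_le.1 hb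
  set R := max C 0
  set ε := ((n : ℝ) * R + 1)⁻¹
  have hε : 0 < ε := by positivity
  refine ⟨fun _ => ε, mem_antiBlocker_iff.2 ⟨fun _ => hε.le, fun x hx => ?_⟩, fun _ => hε⟩
  have hxR : ∀ i, x i ≤ R := fun i =>
    (le_abs_self _).trans ((norm_le_pi_norm x i).trans ((hC x hx).trans (le_max_left _ _)))
  calc (fun _ => ε) ⬝ᵥ x = ε * ∑ i, x i := Finset.mul_sum _ _ _ |>.symm
    _ ≤ ε * ((n : ℝ) * R) := by
        gcongr
        simpa using Finset.sum_le_card_nsmul Finset.univ x R fun i _ => hxR i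
    _ ≤ 1 := by
        rw [← le_div_iff₀' hε, div_eq_mul_inv, one_mul, inv_inv]
        linarith

theorem exists_pos_mem_of_interior_nonempty {P : Set (Fin n → ℝ)}
    (hP : ∀ x ∈ P, ∀ i, 0 ≤ x i) (hfull : (interior P).Nonempty) :
    ∃ q ∈ P, ∀ i, 0 < q i := by
  obtain ⟨q, hq⟩ := hfull
  refine ⟨q, interior_subset hq, fun i => ?_⟩
  have hsub : P ⊆ Function.eval i ⁻¹' Ici 0 := fun x hx => hP x hx i
  have := interior_mono hsub hq
  rw [← (isOpenMap_eval i).preimage_interior_eq_interior_preimage (continuous_apply i),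
    interior_Ici] at this
  exact this

/-- A point `x ≥ 0` outside `P` is strictly separated from `P` by some `c`; then `c⁺ ∈ A(P)`
still separates it. -/
theorem antiBlocker_antiBlocker_subset {P : Set (Fin n → ℝ)} (hconv : Convex ℝ P)
    (hclosed : IsClosed P) (hab : IsAntiBlocking P) (h0 : 0 ∈ P) :
    antiBlocker (antiBlocker P) ⊆ P := by
  classical
  intro x hx
  by_contra hxP
  obtain ⟨f, u, hfP, hfx⟩ := geometric_hahn_banach_closed_point hconv hclosed hxP
  have hu : 0 < u := by simpa using hfP 0 h0
  set c : Fin n → ℝ := fun i => u⁻¹ * f fun j => if i = j then 1 else 0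
  have hcf : ∀ y, c ⬝ᵥ y = u⁻¹ * f y := fun y => by
    rw [← ContinuousLinearMap.coe_coe, LinearMap.pi_apply_eq_sum_univ, Finset.mul_sum]
    exact Finset.sum_congr rfl fun i _ => by
      simp only [c, smul_eq_mul, ContinuousLinearMap.coe_coe]; ring
  have hcP : ∀ q ∈ P, c ⬝ᵥ q ≤ 1 := fun q hq => by
    rw [hcf, inv_mul_le_one₀ hu]
    exact (hfP q hq).le
  have hcA : c⁺ ∈ antiBlocker P :=
    mem_antiBlocker_iff.2 ⟨posPart_nonneg c, fun q hq => posPart_dotProduct_le hab hcP hq⟩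
  have hlt : 1 < c⁺ ⬝ᵥ x := by
    refine lt_of_lt_of_le ?_ (dotProduct_le_dotProduct_of_nonneg_right (le_posPart c) hx.1)
    rwa [hcf, lt_inv_mul_iff₀ hu, mul_one]
  have hle : x ⬝ᵥ c⁺ ≤ 1 := hx.2 _ hcA
  rw [dotProduct_comm] at hle
  linarith

end AntiBlocker

section Cayley

variable {n : ℕ}

theorem isLinearMap_pairing (y : (Fin n → ℝ) × ℝ) :
    IsLinearMap ℝ fun x : (Fin n → ℝ) × ℝ => y.1 ⬝ᵥ x.1 + y.2 * x.2 := by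
  constructor
  · intro x x'
    simp only [Prod.fst_add, Prod.snd_add, dotProduct_add]
    ring
  · intro a x
    simp only [Prod.smul_fst, Prod.smul_snd, dotProduct_smul, smul_eq_mul]
    ring

theorem convex_polarNR (S : Set ((Fin n → ℝ) × ℝ)) : Convex ℝ (polarNR S) := by
  have h : polarNR S = ⋂ x ∈ S, {y | x.1 ⬝ᵥ y.1 + x.2 * y.2 ≤ 1} := by
    ext y
    simp only [polarNR, mem_iInter, mem_ofPred_eq]
    exact forall₂_congr fun x _ => by rw [dotProduct_comm x.1, mul_comm x.2]; rfl
  rw [h]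
  exact convex_iInter₂ fun x _ => convex_halfSpace_le (isLinearMap_pairing x) 1

theorem polarNR_convexHull (S : Set ((Fin n → ℝ) × ℝ)) :
    polarNR (convexHull ℝ S) = polarNR S := by
  refine Subset.antisymm (fun y hy x hx => hy x (subset_convexHull ℝ S hx)) fun y hy => ?_
  have : convexHull ℝ S ⊆ {x | y.1 ⬝ᵥ x.1 + y.2 * x.2 ≤ 1} :=
    convexHull_min hy (convex_halfSpace_le (isLinearMap_pairing y) 1)
  exact fun x hx => this hx

theorem mem_polarNR_cayley_iff {Q₁ Q₂ : Set (Fin n → ℝ)} {y : (Fin n → ℝ) × ℝ} :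
    y ∈ polarNR (cayley Q₁ Q₂) ↔
      (∀ x ∈ Q₁, y.1 ⬝ᵥ x + y.2 ≤ 1) ∧ (∀ x ∈ Q₂, y.1 ⬝ᵥ x - y.2 ≤ 1) := by
  rw [cayley, polarNR_convexHull]
  simp only [polarNR, mem_ofPred_eq, mem_union, or_imp, forall_and, forall_mem_image]
  simp only [mul_one, mul_neg_one, ← sub_eq_add_neg]
  rfl

theorem mem_cayley_of_mem_smul {Q₁ Q₂ : Set (Fin n → ℝ)} {t : ℝ} (ht₀ : 0 ≤ t) (ht₁ : t ≤ 1)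
    {u v : Fin n → ℝ} (hu : u ∈ t • Q₁) (hv : v ∈ (1 - t) • Q₂) :
    (u + v, 2 * t - 1) ∈ cayley Q₁ Q₂ := by
  obtain ⟨p, hp, rfl⟩ := hu
  obtain ⟨a, ha, rfl⟩ := hv
  refine segment_subset_convexHull (x := (p, 1)) (y := (a, -1)) (Or.inl ⟨p, hp, rfl⟩)
    (Or.inr ⟨a, ha, rfl⟩) ⟨t, 1 - t, ht₀, sub_nonneg.2 ht₁, add_sub_cancel t 1, ?_⟩
  ext
  · simp only [Prod.fst_add, Prod.smul_fst]
  · simp only [Prod.snd_add, Prod.smul_snd, smul_eq_mul]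
    ring

theorem image_cayley (c : ℝ) (Q₁ Q₂ : Set (Fin n → ℝ)) :
    (fun p : (Fin n → ℝ) × ℝ => (c • p.1, p.2)) '' cayley Q₁ Q₂ = cayley (c • Q₁) (c • Q₂) := by
  let L : ((Fin n → ℝ) × ℝ) →ₗ[ℝ] (Fin n → ℝ) × ℝ :=
    (c • LinearMap.fst ℝ (Fin n → ℝ) ℝ).prod (LinearMap.snd ℝ (Fin n → ℝ) ℝ)
  change L '' _ = _
  rw [cayley, cayley, L.image_convexHull, image_union, image_image, image_image,
    ← image_smul, ← image_smul, image_image, image_image]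
  rfl

end Cayley

theorem cayley_subset_polarNR {n : ℕ} {P : Set (Fin n → ℝ)} (hP : ∀ x ∈ P, ∀ i, 0 ≤ x i) :
    cayley (-P) (antiBlocker P) ⊆
      polarNR (cayley ((2 : ℝ) • P) ((-2 : ℝ) • antiBlocker P)) := by
  refine convexHull_min ?_ (convex_polarNR _)
  rintro _ (⟨p, hp, rfl⟩ | ⟨a, ha, rfl⟩) <;> rw [mem_polarNR_cayley_iff] <;>
    refine ⟨?_, ?_⟩ <;> rintro _ ⟨x, hx, rfl⟩ <;>
    simp only [dotProduct_smul, smul_eq_mul]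
  · have := dotProduct_nonneg_of_nonneg (show 0 ≤ -p from hP _ hp) (show 0 ≤ x from hP x hx)
    rw [neg_dotProduct] at this
    linarith
  · have := (mem_antiBlocker_iff.1 hx).2 _ hp
    rw [dotProduct_neg, dotProduct_comm] at this
    linarith
  · have := (mem_antiBlocker_iff.1 ha).2 x hx
    linarith
  · have := dotProduct_nonneg_of_nonneg (mem_antiBlocker_iff.1 ha).1 (mem_antiBlocker_iff.1 hx).1
    linarith

theorem polarNR_cayley_subset {n : ℕ} {P : Set (Fin n → ℝ)} (hconv : Convex ℝ P)
    (hcomp : IsCompact P) (hab : IsAntiBlocking P) (hpos : ∃ q ∈ P, ∀ i, 0 < q i) :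
    polarNR (cayley ((2 : ℝ) • P) ((-2 : ℝ) • antiBlocker P)) ⊆
      cayley (-P) (antiBlocker P) := by
  rintro ⟨d, s⟩ hy
  obtain ⟨hyP, hyA⟩ := mem_polarNR_cayley_iff.1 hy
  obtain ⟨t, rfl⟩ : ∃ t, s = 2 * t - 1 := ⟨(1 + s) / 2, by ring⟩
  have hdP : ∀ q ∈ P, d ⬝ᵥ q ≤ 1 - t := fun q hq => by
    have := hyP _ (smul_mem_smul_set (a := (2 : ℝ)) hq)
    simp only [dotProduct_smul, smul_eq_mul] at this
    linarith
  have hdA : ∀ a ∈ antiBlocker P, (-d) ⬝ᵥ a ≤ t := fun a ha => by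
    have := hyA _ (smul_mem_smul_set (a := (-2 : ℝ)) ha)
    simp only [dotProduct_smul, smul_eq_mul, neg_dotProduct] at this ⊢
    linarith
  have h0P : 0 ∈ P := hab.zero_mem (hpos.imp fun q h => h.1)
  have ht₀ : 0 ≤ t := by simpa using hdA 0 (zero_mem_antiBlocker P)
  have ht₁ : t ≤ 1 := by simpa using hdP 0 h0P
  have hdpos : d⁺ ∈ (1 - t) • antiBlocker P :=
    mem_smul_antiBlocker_of_forall_dotProduct_le hpos (by linarith) (posPart_nonneg d)
      fun q hq => posPart_dotProduct_le hab hdP hq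
  have hdneg : d⁻ ∈ t • P := by
    refine smul_set_mono (antiBlocker_antiBlocker_subset hconv hcomp.isClosed hab h0P) ?_
    exact mem_smul_antiBlocker_of_forall_dotProduct_le
      (exists_pos_mem_antiBlocker hcomp.isBounded) ht₀ (negPart_nonneg d)
      fun a ha => posPart_dotProduct_le (isAntiBlocking_antiBlocker hab.1) hdA ha
  have hneg : -d⁻ ∈ t • -P := by
    rw [smul_set_neg]
    exact neg_mem_neg.2 hdneg
  simpa only [neg_add_eq_sub, posPart_sub_negPart] using
    mem_cayley_of_mem_smul ht₀ ht₁ hneg hdpos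

/-- For a full-dimensional anti-blocking polytope `P`, the Cayley polytope
`Q = conv((2P × {1}) ∪ ((−2·A(P)) × {−1}))` satisfies
`Q° = conv(((−P) × {1}) ∪ (A(P) × {−1}))`, the image of `Q` under `(x,t) ↦ (−x/2, t)`;
in particular `Q` is linearly isomorphic to its polar. -/
theorem cayley_antiBlocker_selfdual
    {n : ℕ} (P : Set (Fin n → ℝ))
    (hpoly : IsPolytope P) (hab : IsAntiBlocking P)
    (hfull : (interior P).Nonempty) :
    polarNR (cayley ((2 : ℝ) • P) ((-2 : ℝ) • antiBlocker P)) =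
      cayley (-P) (antiBlocker P) ∧
    polarNR (cayley ((2 : ℝ) • P) ((-2 : ℝ) • antiBlocker P)) =
      (fun p : (Fin n → ℝ) × ℝ => (-(1 / 2 : ℝ) • p.1, p.2)) ''
        cayley ((2 : ℝ) • P) ((-2 : ℝ) • antiBlocker P) := by
  have hpolar : polarNR (cayley ((2 : ℝ) • P) ((-2 : ℝ) • antiBlocker P)) =
      cayley (-P) (antiBlocker P) :=
    (polarNR_cayley_subset hpoly.convex hpoly.isCompact hab
      (exists_pos_mem_of_interior_nonempty hab.1 hfull)).antisymm (cayley_subset_polarNR hab.1)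
  refine ⟨hpolar, ?_⟩
  rw [hpolar, image_cayley, smul_smul, smul_smul, show -(1 / 2 : ℝ) * 2 = -1 by norm_num,
    show -(1 / 2 : ℝ) * -2 = 1 by norm_num, neg_smul_set, one_smul, one_smul]
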